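/- arXiv:2208.04177 — 3 statements merged into one kernel-verified Lean document; each statement's English description precedes it below -/
import Mathlib

section
/- Let μ be a Borel probability measure on ℝⁿ and define the half-space depth φ_μ(x) = inf{μ(H) : H is a closed half-space containing x} and the Cramér transform Λ*_μ(x) = sup_{ξ∈ℝⁿ} (⟨x,ξ⟩ − log ∫ e^{⟨ξ,z⟩} dμ(z)). Then for every x ∈ ℝⁿ, φ_μ(x) ≤ exp(−Λ*_μ(x)). -/
/-! For every direction `ξ`, the closed half-space `{z | ⟪ξ, x⟫ ≤ ⟪ξ, z⟫}` contains `x`, and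
Chernoff's bound (Markov's inequality applied to `exp ⟪ξ, ·⟫`) gives
`μ {z | ⟪ξ, x⟫ ≤ ⟪ξ, z⟫} ≤ exp (Λ_μ(ξ) - ⟪x, ξ⟫)`. Taking the logarithm and optimising over `ξ`
yields `log φ_μ(x) ≤ -Λ*_μ(x)`. -/

open MeasureTheory Real
open scoped RealInnerProductSpace ENNReal

/-- The logarithmic Laplace transform of a measure on `ℝⁿ`, with values in `EReal`. -/
noncomputable def logLaplace {n : ℕ} (μ : Measure (EuclideanSpace ℝ (Fin n)))
    (ξ : EuclideanSpace ℝ (Fin n)) : EReal :=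
  ENNReal.log (∫⁻ z, ENNReal.ofReal (Real.exp ⟪ξ, z⟫) ∂μ)

/-- The Cramér transform of a measure on `ℝⁿ`. -/
noncomputable def cramer {n : ℕ} (μ : Measure (EuclideanSpace ℝ (Fin n)))
    (x : EuclideanSpace ℝ (Fin n)) : EReal :=
  ⨆ ξ : EuclideanSpace ℝ (Fin n), ((⟪x, ξ⟫ : ℝ) : EReal) - logLaplace μ ξ

/-- Tukey's half-space depth: the infimum of the measure of closed half-spaces containing `x`. -/
noncomputable def depth {n : ℕ} (μ : Measure (EuclideanSpace ℝ (Fin n)))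
    (x : EuclideanSpace ℝ (Fin n)) : ℝ≥0∞ :=
  ⨅ (ξ : EuclideanSpace ℝ (Fin n)) (c : ℝ) (_ : c ≤ ⟪ξ, x⟫),
    μ {z | c ≤ ⟪ξ, z⟫}

theorem EReal.coe_sub_le_neg_of_add_coe_le {a : ℝ} {b c : EReal} (h : b + a ≤ c) :
    a - c ≤ -b := by
  induction b <;> induction c <;> simp_all [← EReal.coe_add, ← EReal.coe_sub, ← EReal.coe_neg]

theorem ENNReal.coe_sub_log_le_neg_log {a : ℝ} {d L : ℝ≥0∞}
    (h : d * ENNReal.ofReal (exp a) ≤ L) : a - ENNReal.log L ≤ -ENNReal.log d := by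
  apply EReal.coe_sub_le_neg_of_add_coe_le
  simpa [ENNReal.log_mul_add, ENNReal.log_ofReal_of_pos (exp_pos a)] using
    ENNReal.log_monotone h

theorem measure_le_inner_mul_exp_le_lintegral {E : Type*} [NormedAddCommGroup E]
    [InnerProductSpace ℝ E] [MeasurableSpace E] [OpensMeasurableSpace E]
    (μ : Measure E) (ξ : E) (a : ℝ) :
    μ {z | a ≤ ⟪ξ, z⟫} * ENNReal.ofReal (exp a) ≤ ∫⁻ z, ENNReal.ofReal (exp ⟪ξ, z⟫) ∂μ := by
  have hmeas : Measurable fun z ↦ ENNReal.ofReal (exp ⟪ξ, z⟫) := by fun_prop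
  simpa [mul_comm, ENNReal.ofReal_le_ofReal_iff (exp_nonneg _)] using
    mul_meas_ge_le_lintegral hmeas (ENNReal.ofReal (exp a))

theorem depth_le_measure_le_inner {n : ℕ} (μ : Measure (EuclideanSpace ℝ (Fin n)))
    (x ξ : EuclideanSpace ℝ (Fin n)) : depth μ x ≤ μ {z | ⟪ξ, x⟫ ≤ ⟪ξ, z⟫} :=
  iInf_le_of_le ξ <| iInf_le_of_le _ <| iInf_le _ le_rfl

theorem depth_mul_exp_le_lintegral {n : ℕ} (μ : Measure (EuclideanSpace ℝ (Fin n)))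
    (x ξ : EuclideanSpace ℝ (Fin n)) :
    depth μ x * ENNReal.ofReal (exp ⟪x, ξ⟫) ≤ ∫⁻ z, ENNReal.ofReal (exp ⟪ξ, z⟫) ∂μ := by
  rw [real_inner_comm]
  exact (mul_le_mul_left (depth_le_measure_le_inner μ x ξ) _).trans
    (measure_le_inner_mul_exp_le_lintegral μ ξ _)

theorem stmt0_general (n : ℕ) (μ : Measure (EuclideanSpace ℝ (Fin n)))
    (x : EuclideanSpace ℝ (Fin n)) :
    depth μ x ≤ EReal.exp (-(cramer μ x)) := by
  rw [← ENNReal.exp_log (depth μ x), EReal.exp_le_exp_iff]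
  refine EReal.le_neg_of_le_neg (iSup_le fun ξ ↦ ?_)
  exact ENNReal.coe_sub_log_le_neg_log (depth_mul_exp_le_lintegral μ x ξ)

theorem stmt0 (n : ℕ) (μ : Measure (EuclideanSpace ℝ (Fin n))) [IsProbabilityMeasure μ]
    (x : EuclideanSpace ℝ (Fin n)) :
    depth μ x ≤ EReal.exp (-(cramer μ x)) :=
  stmt0_general n μ x
end

section
/- Let K be a centered convex body of volume 1 in ℝⁿ, n ≥ 2, κ ∈ (0,1/n], and μ a centered κ-concave probability measure with supp(μ) = K and density f. Then (E_μ[(Λ*_μ)²])^{1/2} ≤ (c ln n / κ) ‖f‖_∞^{1/2}, where c > 0 is an absolute constant. In particular, E_μ(Λ*_μ) ≤ (c ln n / κ) ‖f‖_∞^{1/2}. -/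
/-!
Chernoff's bound gives `Λ*_μ(x) ≤ -log ε` as soon as every closed half-space `{⟪ξ, ·⟫ ≥ ⟪ξ, x⟫}`
has `μ`-mass at least `ε`. Let `h` be the maximum of `⟪ξ, ·⟫` on `K` and `r = ‖x‖_K`, so that
`⟪ξ, x⟫ ≤ r h`. Since `μ` is centered, Markov's inequality gives mass `≥ 2/3` to
`{⟪ξ, ·⟫ ≥ -2h}`, and `κ`-concavity, applied to this set and to a cap of `K` near its maximum,
spreads a fraction `((1 - r)/6)^{1/κ}` of that mass onto the half-space. Hence
`Λ*_μ(x) ≤ (4 - log (1 - ‖x‖_K))/κ` on the interior of `K`.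

Since `K \ s K` has volume `1 - sⁿ`, the set where `-log (1 - ‖x‖_K) > t` has volume at most
`n e^{-t}`, and the layer-cake formula bounds `∫_K log² (1 - ‖x‖_K) dx` by `10 log² n`. The
density bound `μ ≤ ‖f‖_∞ · vol` transfers this to `μ`, and Cauchy–Schwarz gives the bound on
the first moment.
-/

open MeasureTheory Real Pointwise
open scoped RealInnerProductSpace ENNReal

/-- A measure `μ` on `ℝⁿ` is `κ`-concave. -/
def KConcave {n : ℕ} (κ : ℝ) (μ : Measure (EuclideanSpace ℝ (Fin n))) : Prop :=
  ∀ A B : Set (EuclideanSpace ℝ (Fin n)), IsCompact A → IsCompact B →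
    0 < μ A → 0 < μ B → ∀ l : ℝ, l ∈ Set.Ioo (0 : ℝ) 1 →
      (ENNReal.ofReal (1 - l) * (μ A) ^ κ + ENNReal.ofReal l * (μ B) ^ κ) ^ (1 / κ)
        ≤ μ ((1 - l) • A + l • B)

open Set Filter Topology

section ConvexBody

variable {E : Type*} [NormedAddCommGroup E] [NormedSpace ℝ E] [MeasurableSpace E] [BorelSpace E]

theorem Convex.zero_mem_interior_of_setIntegral_eq_zero [CompleteSpace E] {μ : Measure E}
    [μ.IsOpenPosMeasure] [IsFiniteMeasureOnCompacts μ] {K : Set E} (hK : Convex ℝ K)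
    (hKc : IsCompact K) (hKint : (interior K).Nonempty) (hcent : ∫ x in K, x ∂μ = 0) :
    0 ∈ interior K := by
  by_contra h0
  obtain ⟨φ, hφ⟩ := geometric_hahn_banach_point_open hK.interior isOpen_interior h0
  have hφ_int : ∀ x ∈ interior K, 0 < φ x := fun x hx => by simpa using hφ x hx
  have hφK : ∀ x ∈ K, 0 ≤ φ x := by
    have : closure (interior K) ⊆ {x | 0 ≤ φ x} :=
      closure_minimal (fun x hx => (hφ_int x hx).le) (isClosed_le continuous_const φ.continuous)
    rw [hK.closure_interior_eq_closure_of_nonempty_interior hKint] at this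
    exact fun x hx => this (subset_closure hx)
  have hint : IntegrableOn (fun x => x) K μ := continuous_id.continuousOn.integrableOn_compact hKc
  have hpos : 0 < ∫ x in K, φ x ∂μ := by
    rw [setIntegral_pos_iff_support_of_nonneg_ae
      (ae_restrict_of_forall_mem hKc.measurableSet hφK) (φ.integrable_comp hint)]
    exact (isOpen_interior.measure_pos μ hKint).trans_le <| measure_mono fun x hx =>
      ⟨(hφ_int x hx).ne', interior_subset hx⟩
  rw [φ.integral_comp_comm hint, hcent, map_zero] at hpos
  exact hpos.false

theorem le_gauge_mul_of_forall_le {F : Type*} [AddCommGroup F] [Module ℝ F] {s : Set F}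
    (hs : Absorbent ℝ s) (φ : F →ₗ[ℝ] ℝ) {h : ℝ} (hφ : ∀ y ∈ s, φ y ≤ h) (x : F) :
    φ x ≤ gauge s x * h := by
  have h0 : 0 ≤ h := by simpa using hφ 0 hs.zero_mem
  have hlt : ∀ b > gauge s x, φ x ≤ b * h := by
    intro b hb
    obtain ⟨c, hc0, hcb, y, hy, rfl⟩ := exists_lt_of_gauge_lt hs hb
    rw [map_smul, smul_eq_mul]
    exact (mul_le_mul_of_nonneg_left (hφ y hy) hc0.le).trans
      (mul_le_mul_of_nonneg_right hcb.le h0)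
  exact ge_of_tendsto ((continuous_id.mul continuous_const).continuousWithinAt
    (s := Ioi (gauge s x)) (x := gauge s x)) (eventually_nhdsWithin_of_forall hlt)

theorem exists_pos_inner_of_mem_nhds_zero {F : Type*} [NormedAddCommGroup F]
    [InnerProductSpace ℝ F] {K : Set F} (hK : K ∈ 𝓝 0) {ξ : F} (hξ : ξ ≠ 0) :
    ∃ z ∈ K, 0 < ⟪ξ, z⟫ := by
  have htend : Tendsto (fun c : ℝ => c • ξ) (𝓝[>] 0) (𝓝 0) := tendsto_nhdsWithin_of_tendsto_nhds
    ((by fun_prop : Continuous fun c : ℝ => c • ξ).tendsto' 0 0 (zero_smul ℝ ξ))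
  obtain ⟨c, hcK, hc⟩ := ((htend.eventually hK).and self_mem_nhdsWithin).exists
  refine ⟨c • ξ, hcK, ?_⟩
  rw [real_inner_smul_right, real_inner_self_eq_norm_sq]
  exact mul_pos hc (pow_pos (norm_pos_iff.2 hξ) 2)

variable [FiniteDimensional ℝ E] (μ : Measure E) [μ.IsAddHaarMeasure]

theorem Convex.addHaar_diff_smul {K : Set E} (hK : Convex ℝ K) (hKc : IsCompact K)
    (h0 : (0 : E) ∈ K) {s : ℝ} (hs : s ∈ Icc (0 : ℝ) 1) :
    μ (K \ s • K) = ENNReal.ofReal (1 - s ^ Module.finrank ℝ E) * μ K := by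
  have hsub : s • K ⊆ K := by
    rintro _ ⟨x, hx, rfl⟩
    exact hK.smul_mem_of_zero_mem h0 hx hs
  have hpow : 0 ≤ s ^ Module.finrank ℝ E := pow_nonneg hs.1 _
  rw [measure_sdiff hsub (hKc.smul s).measurableSet.nullMeasurableSet
      (hKc.smul s).measure_lt_top.ne, Measure.addHaar_smul, abs_of_nonneg hpow,
    ENNReal.ofReal_sub _ hpow, ENNReal.ofReal_one,
    ENNReal.sub_mul fun _ _ => hKc.measure_lt_top.ne, one_mul]

theorem Convex.ae_mem_interior {K : Set E} (hK : Convex ℝ K) (hKc : IsClosed K)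
    {ν : Measure E} (hν : ν ≪ μ) (hsupp : ν Kᶜ = 0) : ∀ᵐ x ∂ν, x ∈ interior K := by
  refine measure_mono_null (fun x hx => ?_)
    (measure_union_null hsupp (hν (hK.addHaar_frontier μ)))
  by_cases hxK : x ∈ K
  · exact Or.inr (hKc.frontier_eq ▸ ⟨hxK, hx⟩)
  · exact Or.inl hxK

theorem Convex.addHaar_lt_neg_log_one_sub_gauge_le {K : Set E} (hK : Convex ℝ K)
    (hKc : IsCompact K) (h0 : (0 : E) ∈ K) {t : ℝ} (ht : 0 ≤ t) :
    μ ({x | t < -Real.log (1 - gauge K x)} ∩ interior K) ≤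
      ENNReal.ofReal (Module.finrank ℝ E * Real.exp (-t)) * μ K := by
  set s := 1 - Real.exp (-t)
  have hs : s ∈ Icc (0 : ℝ) 1 :=
    ⟨sub_nonneg.2 (Real.exp_le_one_iff.2 (neg_nonpos.2 ht)), by simp [s, (Real.exp_pos _).le]⟩
  have hsub : {x | t < -Real.log (1 - gauge K x)} ∩ interior K ⊆ K \ s • K := by
    rintro x ⟨hxt, hxK⟩
    refine ⟨interior_subset hxK, fun hxs => (show t < _ from hxt).not_ge ?_⟩
    have hgs : gauge K x ≤ s := gauge_le_of_mem hs.1 hxs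
    rw [neg_le, ← Real.log_exp (-t)]
    exact Real.log_le_log (Real.exp_pos _) (by linarith)
  calc _ ≤ μ (K \ s • K) := measure_mono hsub
    _ = _ := hK.addHaar_diff_smul μ hKc h0 hs
    _ ≤ _ := by
      gcongr
      have := one_add_mul_le_pow (a := -Real.exp (-t)) (by linarith [hs.1]) (Module.finrank ℝ E)
      rw [← sub_eq_add_neg] at this
      linarith

end ConvexBody

section Layercake

theorem lintegral_Ioi_ofReal_mul_exp_neg {a : ℝ} (ha : 0 ≤ a) :
    ∫⁻ t in Ioi a, ENNReal.ofReal (t * Real.exp (-t)) =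
      ENNReal.ofReal ((a + 1) * Real.exp (-a)) := by
  have hderiv : ∀ t ∈ Ici a,
      HasDerivAt (fun u => -(u + 1) * Real.exp (-u)) (t * Real.exp (-t)) t := by
    intro t _
    exact (((hasDerivAt_id' t).add_const 1).neg.mul (hasDerivAt_neg' t).exp).congr_deriv
      (by simp only [Pi.neg_apply]; ring)
  have hnonneg : ∀ t ∈ Ioi a, 0 ≤ t * Real.exp (-t) := fun t ht =>
    mul_nonneg (ha.trans (le_of_lt ht)) (Real.exp_pos _).le
  have hlim : Tendsto (fun u => -(u + 1) * Real.exp (-u)) atTop (𝓝 0) := by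
    have h := ((Real.tendsto_pow_mul_exp_neg_atTop_nhds_zero 1).add
      Real.tendsto_exp_neg_atTop_nhds_zero).neg
    simp only [pow_one, add_zero, neg_zero] at h
    exact h.congr fun u => by ring
  rw [← ofReal_integral_eq_lintegral_ofReal (integrableOn_Ioi_deriv_of_nonneg' hderiv hnonneg hlim)
      ((ae_restrict_iff' measurableSet_Ioi).2 (Eventually.of_forall hnonneg)),
    integral_Ioi_of_hasDerivAt_of_nonneg' hderiv hnonneg hlim]
  ring_nf

theorem lintegral_sq_le_of_meas_lt_le {α : Type*} [MeasurableSpace α] {ν : Measure α}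
    {F : α → ℝ} (hF : 0 ≤ᵐ[ν] F) (hFm : AEMeasurable F ν) (hν : ν univ ≤ 1) {N : ℝ} (hN : 2 ≤ N)
    (htail : ∀ t > 0, ν {x | t < F x} ≤ ENNReal.ofReal (N * Real.exp (-t))) :
    ∫⁻ x, ENNReal.ofReal (F x ^ 2) ∂ν ≤ ENNReal.ofReal (10 * Real.log N ^ 2) := by
  set T := Real.log N
  have hT : 0.6931471803 < T :=
    Real.log_two_gt_d9.trans_le (Real.log_le_log (by norm_num) hN)
  have hcake := lintegral_rpow_eq_lintegral_meas_lt_mul ν hF hFm two_pos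
  norm_num [Real.rpow_two] at hcake
  have hhead : ∫⁻ t in Ioc 0 T, ν {x | t < F x} * ENNReal.ofReal t ≤ ENNReal.ofReal (T ^ 2) := by
    calc _ ≤ ∫⁻ _ in Ioc 0 T, 1 * ENNReal.ofReal T :=
          setLIntegral_mono' measurableSet_Ioc fun t ht =>
            mul_le_mul' ((measure_mono (subset_univ _)).trans hν) (ENNReal.ofReal_le_ofReal ht.2)
      _ = _ := by
          rw [one_mul, setLIntegral_const, Real.volume_Ioc, sub_zero,
            ← ENNReal.ofReal_mul (by linarith), sq]
  have hrest : ∫⁻ t in Ioi T, ν {x | t < F x} * ENNReal.ofReal t ≤ ENNReal.ofReal (T + 1) := by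
    calc _ ≤ ∫⁻ t in Ioi T, ENNReal.ofReal N * ENNReal.ofReal (t * Real.exp (-t)) := by
          refine setLIntegral_mono' measurableSet_Ioi fun t ht => ?_
          have ht0 : 0 < t := by linarith [mem_Ioi.1 ht]
          rw [← ENNReal.ofReal_mul (by linarith), ← mul_assoc, mul_right_comm,
            ENNReal.ofReal_mul (by positivity)]
          exact mul_le_mul_left (htail t ht0) _
      _ = _ := by
          rw [lintegral_const_mul _ (by fun_prop), lintegral_Ioi_ofReal_mul_exp_neg (by linarith),
            ← ENNReal.ofReal_mul (by linarith), Real.exp_neg, Real.exp_log (by linarith)]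
          congr 1
          field_simp
  calc ∫⁻ x, ENNReal.ofReal (F x ^ 2) ∂ν
      = 2 * ((∫⁻ t in Ioc 0 T, ν {x | t < F x} * ENNReal.ofReal t) +
          ∫⁻ t in Ioi T, ν {x | t < F x} * ENNReal.ofReal t) := by
        rw [hcake, ← lintegral_union measurableSet_Ioi Ioc_disjoint_Ioi_same,
          Ioc_union_Ioi_eq_Ioi (by linarith)]
    _ ≤ 2 * (ENNReal.ofReal (T ^ 2) + ENNReal.ofReal (T + 1)) := by gcongr
    _ ≤ _ := by
      rw [← ENNReal.ofReal_add (by positivity) (by linarith), ← ENNReal.ofReal_ofNat 2,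
        ← ENNReal.ofReal_mul (by norm_num)]
      exact ENNReal.ofReal_le_ofReal (by nlinarith)

end Layercake

section Measures

variable {α : Type*} [MeasurableSpace α]

theorem lintegral_le_rpow_lintegral_rpow_two (ν : Measure α) [IsProbabilityMeasure ν]
    (g : α → ℝ≥0∞) : ∫⁻ x, g x ∂ν ≤ (∫⁻ x, g x ^ (2 : ℝ) ∂ν) ^ ((1 : ℝ) / 2) := by
  obtain ⟨g', hg'm, hg'g, hg'⟩ := exists_measurable_le_lintegral_eq ν g
  have holder := ENNReal.lintegral_mul_le_Lp_mul_Lq ν Real.HolderConjugate.two_two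
    hg'm.aemeasurable aemeasurable_const (g := fun _ => 1)
  simp only [Pi.mul_apply, mul_one, ENNReal.one_rpow, lintegral_const, measure_univ] at holder
  rw [hg']
  exact holder.trans (by gcongr; exact hg'g _)

theorem withDensity_ofReal_le_eLpNorm_top_smul (ν : Measure α) (f : α → ℝ) :
    ν.withDensity (fun x => ENNReal.ofReal (f x)) ≤ eLpNorm f ⊤ ν • ν := by
  have hf : ∀ᵐ x ∂ν, ENNReal.ofReal (f x) ≤ eLpNorm f ⊤ ν := by
    filter_upwards [enorm_ae_le_eLpNormEssSup f ν] with x hx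
    rw [eLpNorm_exponent_top]
    exact (ENNReal.ofReal_le_ofReal (le_abs_self _)).trans
      ((Real.enorm_eq_ofReal_abs _).ge.trans hx)
  refine Measure.le_intro fun s hs _ => ?_
  rw [withDensity_apply _ hs, Measure.smul_apply, smul_eq_mul, ← setLIntegral_const]
  exact lintegral_mono_ae (ae_restrict_of_ae hf)

theorem ofReal_div_le_measure_lt_of_integral_eq_zero (ν : Measure α) [IsProbabilityMeasure ν]
    {g : α → ℝ} (hg : Integrable g ν) (hg0 : ∫ x, g x ∂ν = 0) {h t : ℝ}
    (hgh : ∀ᵐ x ∂ν, g x ≤ h) (ht : 0 < t) :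
    ENNReal.ofReal (t / (h + t)) ≤ ν {x | -t < g x} := by
  have hh : 0 ≤ h := by
    simpa [hg0] using integral_mono_ae hg (integrable_const h) hgh
  have hmarkov := mul_meas_ge_le_integral_of_nonneg (hgh.mono fun x hx => sub_nonneg.2 hx)
    ((integrable_const h).sub hg) (h + t)
  rw [integral_sub (integrable_const h) hg, hg0, integral_const, probReal_univ, one_smul,
    sub_zero] at hmarkov
  have hlow : ν {x | g x ≤ -t} ≤ ENNReal.ofReal (h / (h + t)) := by
    rw [← ofReal_measureReal]
    have hset : {x | h + t ≤ h - g x} = {x | g x ≤ -t} := by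
      ext x
      change h + t ≤ h - g x ↔ g x ≤ -t
      constructor <;> intro <;> linarith
    rw [hset] at hmarkov
    exact ENNReal.ofReal_le_ofReal ((le_div_iff₀' (by linarith)).2 hmarkov)
  have hcompl : {x | -t < g x} = {x | g x ≤ -t}ᶜ := by ext; simp
  rw [hcompl, prob_compl_eq_one_sub₀ (nullMeasurableSet_le hg.aemeasurable aemeasurable_const)]
  calc ENNReal.ofReal (t / (h + t)) = 1 - ENNReal.ofReal (h / (h + t)) := by
        rw [← ENNReal.ofReal_one, ← ENNReal.ofReal_sub _ (by positivity)]
        congr 1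
        field_simp
        ring
    _ ≤ _ := by gcongr

end Measures

section Cramer

variable {n : ℕ} {μ : Measure (EuclideanSpace ℝ (Fin n))}

theorem cramer_nonneg [IsProbabilityMeasure μ] (x : EuclideanSpace ℝ (Fin n)) :
    0 ≤ cramer μ x := by
  refine le_iSup_of_le 0 (le_of_eq ?_)
  simp [logLaplace]

theorem cramer_le_neg_log {x : EuclideanSpace ℝ (Fin n)} {ε : ℝ} (hε : 0 < ε)
    (hmass : ∀ ξ, ENNReal.ofReal ε ≤ μ {z | ⟪ξ, x⟫ ≤ ⟪ξ, z⟫}) :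
    cramer μ x ≤ ((-Real.log ε : ℝ) : EReal) := by
  refine iSup_le fun ξ => ?_
  have hmeas : Measurable fun z : EuclideanSpace ℝ (Fin n) => ENNReal.ofReal (Real.exp ⟪ξ, z⟫) := by
    fun_prop
  have hchernoff : ENNReal.ofReal (Real.exp ⟪ξ, x⟫) * ENNReal.ofReal ε ≤
      ∫⁻ z, ENNReal.ofReal (Real.exp ⟪ξ, z⟫) ∂μ :=
    calc _ ≤ ENNReal.ofReal (Real.exp ⟪ξ, x⟫) * μ {z | ⟪ξ, x⟫ ≤ ⟪ξ, z⟫} :=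
          mul_le_mul_right (hmass ξ) _
      _ ≤ ENNReal.ofReal (Real.exp ⟪ξ, x⟫) *
            μ {z | ENNReal.ofReal (Real.exp ⟪ξ, x⟫) ≤ ENNReal.ofReal (Real.exp ⟪ξ, z⟫)} :=
          mul_le_mul_right (measure_mono fun z hz =>
            ENNReal.ofReal_le_ofReal (Real.exp_le_exp.2 hz)) _
      _ ≤ _ := mul_meas_ge_le_lintegral₀ hmeas.aemeasurable _
  have hlog : ((⟪ξ, x⟫ + Real.log ε : ℝ) : EReal) ≤ logLaplace μ ξ := by
    have := ENNReal.log_monotone hchernoff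
    rwa [ENNReal.log_mul_add, ENNReal.log_ofReal_of_pos (Real.exp_pos _),
      ENNReal.log_ofReal_of_pos hε, Real.log_exp, ← EReal.coe_add] at this
  calc ((⟪x, ξ⟫ : ℝ) : EReal) - logLaplace μ ξ
      ≤ ((⟪x, ξ⟫ : ℝ) : EReal) - ((⟪ξ, x⟫ + Real.log ε : ℝ) : EReal) :=
        EReal.sub_le_sub le_rfl hlog
    _ = ((-Real.log ε : ℝ) : EReal) := by
        rw [← EReal.coe_sub, real_inner_comm]
        ring_nf

theorem EReal.abs_le_ofReal {b : EReal} {m : ℝ} (h0 : 0 ≤ b) (hm : b ≤ m) :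
    b.abs ≤ ENNReal.ofReal m := by
  lift b to ℝ using ⟨(hm.trans_lt (EReal.coe_lt_top m)).ne, (EReal.bot_lt_zero.trans_le h0).ne'⟩
  rw [EReal.abs_def, abs_of_nonneg (EReal.coe_nonneg.1 h0)]
  exact ENNReal.ofReal_le_ofReal (EReal.coe_le_coe_iff.1 hm)

theorem KConcave.ofReal_rpow_mul_le_measure {κ : ℝ} (hμ : KConcave κ μ) (hκ : 0 < κ)
    {A B : Set (EuclideanSpace ℝ (Fin n))} (hA : IsCompact A) (hB : IsCompact B) (hB0 : 0 < μ B)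
    {a : ℝ} (ha : 0 < a) (hAa : ENNReal.ofReal a ≤ μ A) {l : ℝ} (hl : l ∈ Ioo (0 : ℝ) 1) :
    ENNReal.ofReal ((1 - l) ^ (1 / κ) * a) ≤ μ ((1 - l) • A + l • B) := by
  have hl1 : 0 < 1 - l := sub_pos.2 hl.2
  calc ENNReal.ofReal ((1 - l) ^ (1 / κ) * a)
      = (ENNReal.ofReal (1 - l) * ENNReal.ofReal a ^ κ) ^ (1 / κ) := by
        rw [ENNReal.mul_rpow_of_nonneg _ _ (by positivity), ← ENNReal.rpow_mul,
          mul_one_div_cancel hκ.ne', ENNReal.rpow_one, ENNReal.ofReal_rpow_of_pos hl1,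
          ENNReal.ofReal_mul (by positivity)]
    _ ≤ (ENNReal.ofReal (1 - l) * μ A ^ κ + ENNReal.ofReal l * μ B ^ κ) ^ (1 / κ) := by
        gcongr
        exact le_add_right (by gcongr)
    _ ≤ _ := hμ A B hA hB ((ENNReal.ofReal_pos.2 ha).trans_le hAa) hB0 l hl

theorem ofReal_le_measure_halfspace_of_le_mul [IsProbabilityMeasure μ]
    {K : Set (EuclideanSpace ℝ (Fin n))} (hKc : IsCompact K) {κ : ℝ} (hμ : KConcave κ μ)
    (hκ : 0 < κ) (hsupp : μ Kᶜ = 0) (hpos : ∀ U, IsOpen U → (U ∩ K).Nonempty → 0 < μ U)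
    {ξ y : EuclideanSpace ℝ (Fin n)} (hcent : ∫ z, ⟪ξ, z⟫ ∂μ = 0) (hyK : y ∈ K)
    (hle : ∀ z ∈ K, ⟪ξ, z⟫ ≤ ⟪ξ, y⟫) (hh : 0 < ⟪ξ, y⟫) {x : EuclideanSpace ℝ (Fin n)} {r : ℝ}
    (hr : r ∈ Ico (0 : ℝ) 1) (hxr : ⟪ξ, x⟫ ≤ r * ⟪ξ, y⟫) :
    ENNReal.ofReal (((1 - r) / 6) ^ (1 / κ) * (2 / 3)) ≤ μ {z | ⟪ξ, x⟫ ≤ ⟪ξ, z⟫} := by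
  set h := ⟪ξ, y⟫
  set t := (1 - r) / 6
  have ht : t ∈ Ioo (0 : ℝ) 1 :=
    ⟨by simp only [t]; linarith [hr.2], by simp only [t]; linarith [hr.1]⟩
  have hφ : Continuous fun z : EuclideanSpace ℝ (Fin n) => ⟪ξ, z⟫ := by fun_prop
  have hKae : ∀ᵐ z ∂μ, z ∈ K := hsupp
  have hint : Integrable (fun z => ⟪ξ, z⟫) μ := by
    rw [← Measure.restrict_eq_self_of_ae_mem hKae]
    exact hφ.continuousOn.integrableOn_compact hKc
  set A := K ∩ {z | -(2 * h) ≤ ⟪ξ, z⟫}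
  set B := K ∩ {z | (1 - 3 * t) * h ≤ ⟪ξ, z⟫}
  have hA : ENNReal.ofReal (2 / 3) ≤ μ A := by
    have := ofReal_div_le_measure_lt_of_integral_eq_zero μ hint hcent (hKae.mono hle)
      (by positivity : 0 < 2 * h)
    calc ENNReal.ofReal (2 / 3) = ENNReal.ofReal (2 * h / (h + 2 * h)) := by
          congr 1
          field_simp
          ring
      _ ≤ μ {z | -(2 * h) < ⟪ξ, z⟫} := this
      _ ≤ μ ({z | -(2 * h) ≤ ⟪ξ, z⟫} ∩ K) := by
          rw [measure_inter_conull hsupp]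
          exact measure_mono (ofPred_subset_ofPred.2 fun z hz => hz.le)
      _ = μ A := by rw [inter_comm]
  have hB : 0 < μ B := by
    have hy : (1 - 3 * t) * h < ⟪ξ, y⟫ := by nlinarith [ht.1]
    calc 0 < μ {z | (1 - 3 * t) * h < ⟪ξ, z⟫} :=
          hpos _ (isOpen_lt continuous_const hφ) ⟨y, hy, hyK⟩
      _ = μ ({z | (1 - 3 * t) * h < ⟪ξ, z⟫} ∩ K) := (measure_inter_conull hsupp).symm
      _ ≤ μ B := measure_mono fun z hz => ⟨hz.2, mem_ofPred.2 (mem_ofPred.1 hz.1).le⟩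
  -- `t (-2h) + (1 - t)(1 - 3t) h = (1 - 6t + 3t²) h ≥ (1 - 6t) h = r h ≥ ⟪ξ, x⟫`
  have hconv : t • A + (1 - t) • B ⊆ {z | ⟪ξ, x⟫ ≤ ⟪ξ, z⟫} := by
    rintro _ ⟨_, ⟨a, ha, rfl⟩, _, ⟨b, hb, rfl⟩, rfl⟩
    have ha' : -(2 * h) ≤ ⟪ξ, a⟫ := ha.2
    have hb' : (1 - 3 * t) * h ≤ ⟪ξ, b⟫ := hb.2
    have hrt : r = 1 - 6 * t := by simp only [t]; ring
    change ⟪ξ, x⟫ ≤ ⟪ξ, t • a + (1 - t) • b⟫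
    rw [inner_add_right, real_inner_smul_right, real_inner_smul_right]
    rw [hrt] at hxr
    nlinarith [mul_le_mul_of_nonneg_left ha' ht.1.le,
      mul_le_mul_of_nonneg_left hb' (sub_pos.2 ht.2).le,
      mul_nonneg (mul_nonneg ht.1.le ht.1.le) hh.le]
  have hAc : IsCompact A := hKc.inter_right (isClosed_le continuous_const hφ)
  have hBc : IsCompact B := hKc.inter_right (isClosed_le continuous_const hφ)
  have key := hμ.ofReal_rpow_mul_le_measure hκ hAc hBc hB (by norm_num) hA (l := 1 - t)
    ⟨by linarith [ht.2], by linarith [ht.1]⟩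
  rw [sub_sub_cancel] at key
  exact key.trans (measure_mono hconv)

theorem ofReal_le_measure_halfspace [IsProbabilityMeasure μ] {K : Set (EuclideanSpace ℝ (Fin n))}
    (hKc : IsCompact K) (h0K : 0 ∈ interior K) {κ : ℝ} (hμ : KConcave κ μ) (hκ : 0 < κ)
    (hsupp : μ Kᶜ = 0) (hpos : ∀ U, IsOpen U → (U ∩ K).Nonempty → 0 < μ U)
    (ξ : EuclideanSpace ℝ (Fin n)) (hcent : ∫ z, ⟪z, ξ⟫ ∂μ = 0)
    {x : EuclideanSpace ℝ (Fin n)} (hx : x ∈ interior K) :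
    ENNReal.ofReal (((1 - gauge K x) / 6) ^ (1 / κ) * (2 / 3)) ≤ μ {z | ⟪ξ, x⟫ ≤ ⟪ξ, z⟫} := by
  have hK : K ∈ 𝓝 0 := mem_interior_iff_mem_nhds.1 h0K
  have hr : gauge K x ∈ Ico (0 : ℝ) 1 := ⟨gauge_nonneg x, interior_subset_gauge_lt_one K hx⟩
  rcases eq_or_ne ξ 0 with rfl | hξ
  · simp only [inner_zero_left, le_refl, ofPred_true, measure_univ]
    refine ENNReal.ofReal_le_one.2 ?_
    have := Real.rpow_le_one (x := (1 - gauge K x) / 6) (by linarith [hr.2]) (by linarith [hr.1])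
      (by positivity : 0 ≤ 1 / κ)
    nlinarith
  obtain ⟨y, hyK, hymax⟩ := hKc.exists_isMaxOn ⟨0, mem_of_mem_nhds hK⟩
    (by fun_prop : Continuous fun z : EuclideanSpace ℝ (Fin n) => ⟪ξ, z⟫).continuousOn
  have hle : ∀ z ∈ K, ⟪ξ, z⟫ ≤ ⟪ξ, y⟫ := fun z hz => hymax hz
  obtain ⟨z, hzK, hz⟩ := exists_pos_inner_of_mem_nhds_zero hK hξ
  exact ofReal_le_measure_halfspace_of_le_mul hKc hμ hκ hsupp hpos
    (by simpa [real_inner_comm] using hcent) hyK hle (hz.trans_le (hle z hzK)) hr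
    (le_gauge_mul_of_forall_le (absorbent_nhds_zero hK) (innerₗ _ ξ) hle x)

theorem abs_cramer_le [IsProbabilityMeasure μ] {K : Set (EuclideanSpace ℝ (Fin n))}
    (hKc : IsCompact K) (h0K : 0 ∈ interior K) {κ : ℝ} (hμ : KConcave κ μ) (hκ : 0 < κ)
    (hκ1 : κ ≤ 1) (hsupp : μ Kᶜ = 0) (hpos : ∀ U, IsOpen U → (U ∩ K).Nonempty → 0 < μ U)
    (hcent : ∀ ξ, ∫ z, ⟪z, ξ⟫ ∂μ = 0) {x : EuclideanSpace ℝ (Fin n)} (hx : x ∈ interior K) :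
    (cramer μ x).abs ≤ ENNReal.ofReal ((4 - Real.log (1 - gauge K x)) / κ) := by
  have hr : 0 < 1 - gauge K x := sub_pos.2 (interior_subset_gauge_lt_one K hx)
  have hcr := cramer_le_neg_log (by positivity) fun ξ =>
    ofReal_le_measure_halfspace hKc h0K hμ hκ hsupp hpos ξ (hcent ξ) hx
  refine EReal.abs_le_ofReal (cramer_nonneg x) (hcr.trans (EReal.coe_le_coe_iff.2 ?_))
  rw [Real.log_mul (by positivity) (by norm_num), Real.log_rpow (by positivity),
    Real.log_div hr.ne' (by norm_num), Real.log_div (by norm_num) (by norm_num),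
    show (6 : ℝ) = 2 * 3 by norm_num, Real.log_mul (by norm_num) (by norm_num), le_div_iff₀ hκ]
  have h2 : 0 ≤ Real.log 2 := Real.log_nonneg (by norm_num)
  have h23 : Real.log 2 ≤ Real.log 3 := Real.log_le_log (by norm_num) (by norm_num)
  have h3 : Real.log 3 ≤ 2 := by linarith [Real.log_le_sub_one_of_pos (by norm_num : (0 : ℝ) < 3)]
  field_simp
  nlinarith [mul_le_mul_of_nonneg_right hκ1 (sub_nonneg.2 h23)]

end Cramer

section Main

variable {n : ℕ} {K : Set (EuclideanSpace ℝ (Fin n))}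

theorem setLIntegral_interior_sq_four_sub_log_one_sub_gauge_le (hn : 2 ≤ n) (hKc : IsCompact K)
    (hKconv : Convex ℝ K) (h0K : 0 ∈ interior K) (hvol : volume K = 1) {κ : ℝ} (hκ : 0 < κ) :
    ∫⁻ x in interior K, ENNReal.ofReal (((4 - Real.log (1 - gauge K x)) / κ) ^ 2) ≤
      ENNReal.ofReal ((10 * Real.log n / κ) ^ 2) := by
  set L : EuclideanSpace ℝ (Fin n) → ℝ := fun x => -Real.log (1 - gauge K x)
  have hLm : Measurable L :=
    ((continuous_gauge hKconv (mem_interior_iff_mem_nhds.1 h0K)).measurable.const_sub 1).log.neg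
  have hL0 : ∀ x ∈ interior K, 0 ≤ L x := fun x hx =>
    neg_nonneg.2 (Real.log_nonpos (sub_nonneg.2 (interior_subset_gauge_lt_one K hx).le)
      (sub_le_self _ (gauge_nonneg x)))
  have hn' : (2 : ℝ) ≤ n := by exact_mod_cast hn
  have hlogn : 0.6931471803 < Real.log n :=
    Real.log_two_gt_d9.trans_le (Real.log_le_log (by norm_num) hn')
  have hvolint : volume (interior K) ≤ 1 := hvol ▸ measure_mono interior_subset
  have hL2 : ∫⁻ x in interior K, ENNReal.ofReal (L x ^ 2) ≤
      ENNReal.ofReal (10 * Real.log n ^ 2) := by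
    refine lintegral_sq_le_of_meas_lt_le ((ae_restrict_iff' isOpen_interior.measurableSet).2
      (Eventually.of_forall hL0)) hLm.aemeasurable (by simpa using hvolint) hn' fun t ht => ?_
    rw [Measure.restrict_apply' isOpen_interior.measurableSet]
    simpa [finrank_euclideanSpace_fin, hvol] using
      hKconv.addHaar_lt_neg_log_one_sub_gauge_le volume hKc (interior_subset h0K) ht.le
  calc _ ≤ ∫⁻ x in interior K, (ENNReal.ofReal (32 / κ ^ 2) +
          ENNReal.ofReal (2 / κ ^ 2) * ENNReal.ofReal (L x ^ 2)) := by
        refine setLIntegral_mono' isOpen_interior.measurableSet fun x hx => ?_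
        rw [← ENNReal.ofReal_mul (by positivity),
          ← ENNReal.ofReal_add (by positivity) (by positivity)]
        refine ENNReal.ofReal_le_ofReal ?_
        rw [sub_eq_add_neg]
        have hsq : (4 + L x) ^ 2 ≤ 32 + 2 * L x ^ 2 := by nlinarith [sq_nonneg (L x - 4)]
        calc ((4 + L x) / κ) ^ 2 = (4 + L x) ^ 2 / κ ^ 2 := div_pow _ _ _
          _ ≤ (32 + 2 * L x ^ 2) / κ ^ 2 := by gcongr
          _ = _ := by ring
    _ = ENNReal.ofReal (32 / κ ^ 2) * volume (interior K) +
          ENNReal.ofReal (2 / κ ^ 2) * ∫⁻ x in interior K, ENNReal.ofReal (L x ^ 2) := by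
        rw [lintegral_add_left measurable_const, setLIntegral_const,
          lintegral_const_mul _ (hLm.pow_const 2).ennreal_ofReal]
    _ ≤ ENNReal.ofReal (32 / κ ^ 2) * 1 +
          ENNReal.ofReal (2 / κ ^ 2) * ENNReal.ofReal (10 * Real.log n ^ 2) := by
        gcongr
    _ ≤ _ := by
        rw [mul_one, ← ENNReal.ofReal_mul (by positivity), ← ENNReal.ofReal_add (by positivity)
          (by positivity)]
        refine ENNReal.ofReal_le_ofReal ?_
        rw [show 32 / κ ^ 2 + 2 / κ ^ 2 * (10 * Real.log n ^ 2) =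
          (32 + 20 * Real.log n ^ 2) / κ ^ 2 by ring, div_pow]
        gcongr
        nlinarith

theorem rpow_lintegral_abs_cramer_sq_le (hn : 2 ≤ n) (hKc : IsCompact K) (hKconv : Convex ℝ K)
    (h0K : 0 ∈ interior K) (hvol : volume K = 1) {κ : ℝ} (hκ : 0 < κ) (hκ1 : κ ≤ 1)
    {f : EuclideanSpace ℝ (Fin n) → ℝ} {μ : Measure (EuclideanSpace ℝ (Fin n))}
    [IsProbabilityMeasure μ] (hμf : μ = volume.withDensity (fun x => ENNReal.ofReal (f x)))
    (hμ : KConcave κ μ) (hcent : ∀ ξ, ∫ z, ⟪z, ξ⟫ ∂μ = 0) (hsupp : μ Kᶜ = 0)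
    (hpos : ∀ U, IsOpen U → (U ∩ K).Nonempty → 0 < μ U) :
    (∫⁻ x, (cramer μ x).abs ^ (2 : ℝ) ∂μ) ^ ((1 : ℝ) / 2) ≤
      ENNReal.ofReal (10 * Real.log n / κ) * eLpNorm f ⊤ volume ^ ((1 : ℝ) / 2) := by
  set S := eLpNorm f ⊤ volume
  have hμS : μ ≤ S • volume := hμf ▸ withDensity_ofReal_le_eLpNorm_top_smul volume f
  have hint : ∀ᵐ x ∂μ, x ∈ interior K := hKconv.ae_mem_interior volume hKc.isClosed
    (hμf ▸ withDensity_absolutelyContinuous _ _) hsupp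
  have hbound : ∀ x ∈ interior K, (cramer μ x).abs ^ (2 : ℝ) ≤
      ENNReal.ofReal (((4 - Real.log (1 - gauge K x)) / κ) ^ 2) := fun x hx => by
    have hcr := abs_cramer_le hKc h0K hμ hκ hκ1 hsupp hpos hcent hx
    have hnonneg : 0 ≤ (4 - Real.log (1 - gauge K x)) / κ := by
      have := Real.log_nonpos (sub_nonneg.2 (interior_subset_gauge_lt_one K hx).le)
        (sub_le_self _ (gauge_nonneg x))
      exact div_nonneg (by linarith) hκ.le
    calc _ ≤ ENNReal.ofReal ((4 - Real.log (1 - gauge K x)) / κ) ^ (2 : ℝ) := by gcongr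
      _ = _ := by rw [ENNReal.ofReal_rpow_of_nonneg hnonneg zero_le_two, Real.rpow_two]
  have hc : 0 ≤ 10 * Real.log n / κ := by positivity
  calc (∫⁻ x, (cramer μ x).abs ^ (2 : ℝ) ∂μ) ^ ((1 : ℝ) / 2)
      ≤ (∫⁻ x in interior K, ENNReal.ofReal (((4 - Real.log (1 - gauge K x)) / κ) ^ 2) ∂μ)
          ^ ((1 : ℝ) / 2) := by
        refine ENNReal.rpow_le_rpow ?_ (by norm_num)
        exact (lintegral_mono_ae (hint.mono fun x hx =>
          (hbound x hx).trans_eq (indicator_of_mem hx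
            (fun x => ENNReal.ofReal (((4 - Real.log (1 - gauge K x)) / κ) ^ 2))).symm)).trans_eq
          (lintegral_indicator isOpen_interior.measurableSet _)
    _ ≤ (S * ENNReal.ofReal ((10 * Real.log n / κ) ^ 2)) ^ ((1 : ℝ) / 2) := by
        gcongr
        calc _ ≤ ∫⁻ x in interior K, ENNReal.ofReal (((4 - Real.log (1 - gauge K x)) / κ) ^ 2)
              ∂(S • volume) := lintegral_mono' (Measure.restrict_mono subset_rfl hμS) le_rfl
          _ ≤ _ := by
            rw [Measure.restrict_smul, lintegral_smul_measure, smul_eq_mul]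
            gcongr
            exact setLIntegral_interior_sq_four_sub_log_one_sub_gauge_le hn hKc hKconv h0K hvol hκ
    _ = _ := by
        rw [ENNReal.mul_rpow_of_nonneg _ _ (by norm_num),
          ENNReal.ofReal_rpow_of_nonneg (by positivity) (by norm_num), ← Real.sqrt_eq_rpow,
          Real.sqrt_sq hc, mul_comm]

end Main

/-- Moment bounds: there is an absolute constant `c > 0` such that for every centered
`κ`-concave probability measure `μ` with `supp(μ) = K` a centered convex body of volume 1 in
`ℝⁿ`, `n ≥ 2`, one has `(E_μ[(Λ*_μ)²])^{1/2} ≤ (c ln n / κ) ‖f‖_∞^{1/2}`, and in particular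
`E_μ(Λ*_μ) ≤ (c ln n / κ) ‖f‖_∞^{1/2}`. -/
theorem stmt15 :
    ∃ c : ℝ, 0 < c ∧
      ∀ (n : ℕ), 2 ≤ n →
      ∀ (K : Set (EuclideanSpace ℝ (Fin n))),
        IsCompact K → Convex ℝ K → (interior K).Nonempty →
        volume K = 1 → (∫ x in K, x) = 0 →
      ∀ (κ : ℝ), κ ∈ Set.Ioc (0 : ℝ) (1 / n) →
      ∀ (f : EuclideanSpace ℝ (Fin n) → ℝ)
        (μ : Measure (EuclideanSpace ℝ (Fin n))), IsProbabilityMeasure μ →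
        μ = volume.withDensity (fun x => ENNReal.ofReal (f x)) →
        KConcave κ μ →
        (∀ ξ : EuclideanSpace ℝ (Fin n), ∫ z, ⟪z, ξ⟫ ∂μ = 0) →
        μ Kᶜ = 0 →
        (∀ U : Set (EuclideanSpace ℝ (Fin n)), IsOpen U → (U ∩ K).Nonempty → 0 < μ U) →
        (∫⁻ x, (cramer μ x).abs ^ (2 : ℝ) ∂μ) ^ ((1 : ℝ) / 2)
            ≤ ENNReal.ofReal (c * Real.log n / κ) * (eLpNorm f ⊤ volume) ^ ((1 : ℝ) / 2) ∧
          ∫⁻ x, (cramer μ x).abs ∂μ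
            ≤ ENNReal.ofReal (c * Real.log n / κ) * (eLpNorm f ⊤ volume) ^ ((1 : ℝ) / 2) := by
  refine ⟨10, by norm_num, fun n hn K hKc hKconv hKint hvol hKcent κ hκ f μ hμ hμf hconc hcent
    hsupp hpos => ?_⟩
  have h0K := hKconv.zero_mem_interior_of_setIntegral_eq_zero hKc hKint hKcent
  have hκ1 : κ ≤ 1 := hκ.2.trans (div_le_one_of_le₀ (by exact_mod_cast one_le_two.trans hn)
    n.cast_nonneg)
  have hsq := rpow_lintegral_abs_cramer_sq_le hn hKc hKconv h0K hvol hκ.1 hκ1 hμf hconc hcent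
    hsupp hpos
  exact ⟨hsq, (lintegral_le_rpow_lintegral_rpow_two μ _).trans hsq⟩
end

section
/- Let μ be a probability measure on ℝⁿ, N > n, X₁,…,X_N i.i.d. with law μ, and K_N = conv{X₁,…,X_N}. Then for every t > 0, E_{μ^N}[μ(K_N)] ≤ μ(B_t(μ)) + N e^{−t}, where B_t(μ) = {x : Λ*_μ(x) ≤ t}. -/
/-!
If `x ∉ B_t(μ)`, some `ξ` has `⟪x, ξ⟫ - Λ_μ(ξ) > t`, and the Chernoff bound gives
`μ {z | ⟪ξ, x⟫ ≤ ⟪ξ, z⟫} ≤ e^{-t}`. A point of `K_N` cannot be strictly separated from all the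
`X_i`, so `x ∈ K_N` forces some `X_i` into that half-space: by a union bound
`P(x ∈ K_N) ≤ N e^{-t}`. Integrating in `x` (Fubini) splits `E μ(K_N)` into the part over
`B_t(μ)`, at most `μ(B_t(μ))`, and the rest, at most `N e^{-t}`.
-/

open MeasureTheory Real
open scoped RealInnerProductSpace ENNReal

section HalfSpaces

variable {E : Type*} [NormedAddCommGroup E] [InnerProductSpace ℝ E]

/-- The intersection of all closed half-spaces containing the points `X i`; for finite `ι` this is
their convex hull, but its graph is visibly closed, which makes it measurable. -/
def halfSpaceHull {ι : Type*} (X : ι → E) : Set E :=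
  {x | ∀ ξ : E, ∃ i, ⟪ξ, x⟫ ≤ ⟪ξ, X i⟫}

/-- Tukey's half-space depth `φ_μ`. -/
noncomputable def halfSpaceDepth [MeasurableSpace E] (μ : Measure E) (x : E) : ℝ≥0∞ :=
  ⨅ ξ : E, μ {z | ⟪ξ, x⟫ ≤ ⟪ξ, z⟫}

theorem convexHull_range_subset_halfSpaceHull {ι : Type*} (X : ι → E) :
    convexHull ℝ (Set.range X) ⊆ halfSpaceHull X := by
  intro x hx ξ
  by_contra! hlt
  have hconv : Convex ℝ {y : E | ⟪ξ, y⟫ < ⟪ξ, x⟫} :=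
    convex_halfSpace_lt ⟨inner_add_right ξ, fun c y => real_inner_smul_right ξ y c⟩ _
  have hsub : Set.range X ⊆ {y : E | ⟪ξ, y⟫ < ⟪ξ, x⟫} := Set.range_subset_iff.2 hlt
  have hxx : ⟪ξ, x⟫ < ⟪ξ, x⟫ := convexHull_min hsub hconv hx
  exact lt_irrefl _ hxx

theorem isClosed_setOf_mem_halfSpaceHull {ι : Type*} [Finite ι] :
    IsClosed {p : (ι → E) × E | p.2 ∈ halfSpaceHull p.1} := by
  have hinter : {p : (ι → E) × E | p.2 ∈ halfSpaceHull p.1} =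
      ⋂ ξ : E, ⋃ i, {p | ⟪ξ, p.2⟫ ≤ ⟪ξ, p.1 i⟫} := by
    ext p
    simp [halfSpaceHull]
  rw [hinter]
  exact isClosed_iInter fun ξ => isClosed_iUnion_of_finite fun i =>
    isClosed_le (by fun_prop) (by fun_prop)

theorem measure_pi_setOf_mem_halfSpaceHull_le [MeasurableSpace E] {ι : Type*} [Fintype ι]
    (μ : Measure E) [IsProbabilityMeasure μ] (x : E) :
    Measure.pi (fun _ : ι => μ) {X | x ∈ halfSpaceHull X} ≤
      Fintype.card ι * halfSpaceDepth μ x := by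
  rw [halfSpaceDepth, ENNReal.mul_iInf fun h => absurd h (ENNReal.natCast_ne_top _)]
  refine le_iInf fun ξ => ?_
  set H := {z : E | ⟪ξ, x⟫ ≤ ⟪ξ, z⟫}
  have hmarginal (i : ι) : Measure.pi (fun _ : ι => μ) (Function.eval i ⁻¹' H) ≤ μ H := by
    have heval := measurePreserving_eval (fun _ : ι => μ) i
    exact (Measure.le_map_apply heval.measurable.aemeasurable H).trans_eq (by rw [heval.map_eq])
  calc Measure.pi (fun _ : ι => μ) {X | x ∈ halfSpaceHull X}
      ≤ Measure.pi (fun _ : ι => μ) (⋃ i, Function.eval i ⁻¹' H) :=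
        measure_mono fun X hX => Set.mem_iUnion.2 (hX ξ)
    _ ≤ ∑ i, Measure.pi (fun _ : ι => μ) (Function.eval i ⁻¹' H) := measure_iUnion_fintype_le _ _
    _ ≤ ∑ _i : ι, μ H := Finset.sum_le_sum fun i _ => hmarginal i
    _ = Fintype.card ι * μ H := by rw [Finset.sum_const, nsmul_eq_mul, Finset.card_univ]

theorem ofReal_exp_mul_measure_halfSpace_le [MeasurableSpace E] [OpensMeasurableSpace E]
    (μ : Measure E) (ξ x : E) :
    ENNReal.ofReal (Real.exp ⟪ξ, x⟫) * μ {z | ⟪ξ, x⟫ ≤ ⟪ξ, z⟫} ≤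
      ∫⁻ z, ENNReal.ofReal (Real.exp ⟪ξ, z⟫) ∂μ := by
  refine le_trans ?_ (mul_meas_ge_le_lintegral₀ (by fun_prop) (ENNReal.ofReal (Real.exp ⟪ξ, x⟫)))
  gcongr
  exact fun hz => ENNReal.ofReal_le_ofReal (Real.exp_le_exp.2 hz)

end HalfSpaces

section Cramer

variable {n : ℕ}

theorem lowerSemicontinuous_cramer (μ : Measure (EuclideanSpace ℝ (Fin n))) :
    LowerSemicontinuous (cramer μ) :=
  lowerSemicontinuous_iSup fun ξ =>
    EReal.lowerSemicontinuous_add.comp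
      (f := fun p : EReal × EReal => p.1 + p.2)
      (g := fun x => (((⟪x, ξ⟫ : ℝ) : EReal), -logLaplace μ ξ))
      ((continuous_coe_real_ereal.comp (by fun_prop)).prodMk continuous_const)

theorem isClosed_setOf_cramer_le (μ : Measure (EuclideanSpace ℝ (Fin n))) (t : EReal) :
    IsClosed {x | cramer μ x ≤ t} :=
  (lowerSemicontinuous_cramer μ).isClosed_preimage t

theorem ENNReal.lt_ofReal_exp_of_lt_sub_log {L : ℝ≥0∞} {c t : ℝ} (h : (t : EReal) < c - ENNReal.log L) :
    L < ENNReal.ofReal (Real.exp (c - t)) := by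
  have hlog : ENNReal.log L < ((c - t : ℝ) : EReal) := by
    rw [EReal.coe_sub, EReal.lt_sub_iff_add_lt (.inl (EReal.coe_ne_bot t))
      (.inl (EReal.coe_ne_top t)), add_comm]
    exact (EReal.lt_sub_iff_add_lt (.inr (EReal.coe_ne_top t)) (.inr (EReal.coe_ne_bot t))).1 h
  rw [← EReal.exp_coe, ← ENNReal.exp_log L]
  exact EReal.exp_lt_exp_iff.2 hlog

theorem halfSpaceDepth_le_exp_neg_of_lt_cramer (μ : Measure (EuclideanSpace ℝ (Fin n)))
    {x : EuclideanSpace ℝ (Fin n)} {t : ℝ} (hx : (t : EReal) < cramer μ x) :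
    halfSpaceDepth μ x ≤ ENNReal.ofReal (Real.exp (-t)) := by
  obtain ⟨ξ, hξ⟩ := lt_iSup_iff.1 hx
  set c := ⟪ξ, x⟫
  have hL := ENNReal.lt_ofReal_exp_of_lt_sub_log (c := c) (by rwa [real_inner_comm] at hξ)
  have hpos : ENNReal.ofReal (Real.exp c) ≠ 0 := by positivity
  refine (iInf_le _ ξ).trans <|
    (ENNReal.mul_le_mul_iff_right hpos ENNReal.ofReal_ne_top).1 ?_
  calc ENNReal.ofReal (Real.exp c) * μ {z | c ≤ ⟪ξ, z⟫}
      ≤ ∫⁻ z, ENNReal.ofReal (Real.exp ⟪ξ, z⟫) ∂μ := ofReal_exp_mul_measure_halfSpace_le μ ξ x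
    _ ≤ ENNReal.ofReal (Real.exp (c - t)) := hL.le
    _ = ENNReal.ofReal (Real.exp c) * ENNReal.ofReal (Real.exp (-t)) := by
      rw [← ENNReal.ofReal_mul (Real.exp_pos c).le, ← Real.exp_add, sub_eq_add_neg]

end Cramer

theorem lintegral_le_measure_add_of_le_of_notMem {α : Type*} [MeasurableSpace α] {μ : Measure α}
    [IsProbabilityMeasure μ] {f : α → ℝ≥0∞} {s : Set α} {c : ℝ≥0∞} (hs : MeasurableSet s)
    (hf : ∀ x, f x ≤ 1) (hfc : ∀ x ∉ s, f x ≤ c) :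
    ∫⁻ x, f x ∂μ ≤ μ s + c :=
  calc ∫⁻ x, f x ∂μ ≤ ∫⁻ x, (s.indicator 1 x + c) ∂μ := by
        refine lintegral_mono fun x => ?_
        by_cases hx : x ∈ s
        · simpa [hx] using le_add_right (hf x)
        · simpa [hx] using hfc x hx
    _ = μ s + c := by
        rw [lintegral_add_right _ measurable_const, lintegral_indicator_one hs, lintegral_const,
          measure_univ, mul_one]

theorem stmt17_general (n N : ℕ)
    (μ : Measure (EuclideanSpace ℝ (Fin n))) [IsProbabilityMeasure μ]
    (t : ℝ) :
    ∫⁻ X : Fin N → EuclideanSpace ℝ (Fin n),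
        μ (convexHull ℝ (Set.range X)) ∂(Measure.pi fun _ => μ)
      ≤ μ {x | cramer μ x ≤ (t : EReal)} + N * ENNReal.ofReal (Real.exp (-t)) := by
  have hhull := (isClosed_setOf_mem_halfSpaceHull (E := EuclideanSpace ℝ (Fin n))
    (ι := Fin N)).measurableSet
  calc ∫⁻ X : Fin N → EuclideanSpace ℝ (Fin n),
        μ (convexHull ℝ (Set.range X)) ∂(Measure.pi fun _ => μ)
      ≤ ∫⁻ X, μ (halfSpaceHull X) ∂(Measure.pi fun _ => μ) :=
        lintegral_mono fun X => measure_mono (convexHull_range_subset_halfSpaceHull X)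
    _ = ((Measure.pi fun _ => μ).prod μ) {p | p.2 ∈ halfSpaceHull p.1} :=
        (Measure.prod_apply hhull).symm
    _ = ∫⁻ x, Measure.pi (fun _ => μ) {X : Fin N → _ | x ∈ halfSpaceHull X} ∂μ :=
        Measure.prod_apply_symm hhull
    _ ≤ μ {x | cramer μ x ≤ (t : EReal)} + N * ENNReal.ofReal (Real.exp (-t)) := by
        refine lintegral_le_measure_add_of_le_of_notMem
          (isClosed_setOf_cramer_le μ t).measurableSet (fun _ => prob_le_one) fun x hx => ?_
        calc Measure.pi (fun _ => μ) {X : Fin N → _ | x ∈ halfSpaceHull X}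
            ≤ Fintype.card (Fin N) * halfSpaceDepth μ x := measure_pi_setOf_mem_halfSpaceHull_le μ x
          _ ≤ N * ENNReal.ofReal (Real.exp (-t)) := by
            rw [Fintype.card_fin]
            gcongr
            exact halfSpaceDepth_le_exp_neg_of_lt_cramer μ (not_le.1 hx)

/-- Upper bound for the expected measure of the random polytope `K_N = conv{X₁,…,X_N}` of
`N` i.i.d. points with law `μ`: `E[μ(K_N)] ≤ μ(B_t(μ)) + N e^{−t}` where
`B_t(μ) = {Λ*_μ ≤ t}`. -/
theorem stmt17 (n N : ℕ) (hN : n < N)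
    (μ : Measure (EuclideanSpace ℝ (Fin n))) [IsProbabilityMeasure μ]
    (t : ℝ) (ht : 0 < t) :
    ∫⁻ X : Fin N → EuclideanSpace ℝ (Fin n),
        μ (convexHull ℝ (Set.range X)) ∂(Measure.pi fun _ => μ)
      ≤ μ {x | cramer μ x ≤ (t : EReal)} + N * ENNReal.ofReal (Real.exp (-t)) :=
  stmt17_general n N μ t
end
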